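/- arXiv:math/9707216 — 2 statements merged into one kernel-verified Lean document; each statement's English description precedes it below -/
import Mathlib

section
/- The only 1-dimensional obstruction to shellability is the complex with four distinct vertices a,b,c,d and facets {a,b} and {c,d}; that is, every nonshellable 1-dimensional simplicial complex that is not equal to this complex (up to isomorphism) contains a proper induced subcomplex that is nonshellable. -/
open Finset

variable {V : Type*} [DecidableEq V]

/-- A (finite abstract) simplicial complex: a finset of finsets closed under subsets. -/
def IsComplex (K : Finset (Finset V)) : Prop :=
  ∀ F ∈ K, ∀ G ⊆ F, G ∈ K

/-- The facets (maximal faces) of a complex. -/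
def facets (K : Finset (Finset V)) : Finset (Finset V) := by
  classical exact K.filter (fun F => ∀ G ∈ K, F ⊆ G → F = G)

/-- `L` is a shelling order of the facets of `K`: for each `i ≥ 2` (0-indexed `i ≥ 1`),
the intersection of the closed simplex on `F_i` with the union of the previous closed simplices
is pure of dimension `dim F_i - 1`: every face `G` of the intersection is contained in a face `H`
of the intersection with `H.card = F_i.card - 1`. -/
def IsShelling (K : Finset (Finset V)) (L : List (Finset V)) : Prop :=
  L.Nodup ∧ L.toFinset = facets K ∧
  ∀ i : Fin L.length, i.1 ≠ 0 → ∀ G ⊆ L.get i,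
    (∃ j : Fin L.length, j < i ∧ G ⊆ L.get j) →
    ∃ H, G ⊆ H ∧ H ⊆ L.get i ∧ H.card + 1 = (L.get i).card ∧
      ∃ j : Fin L.length, j < i ∧ H ⊆ L.get j

/-- A complex is shellable if it admits a shelling order of its facets. -/
def Shellable (K : Finset (Finset V)) : Prop := ∃ L, IsShelling K L

/-- The subcomplex of `K` induced by a vertex subset `U`. -/
def inducedSub (K : Finset (Finset V)) (U : Finset V) : Finset (Finset V) :=
  K.filter (fun F => F ⊆ U)

/-- The vertex set of a complex. -/
def verts (K : Finset (Finset V)) : Finset V := K.sup id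

/-- The link of a vertex `v` in `K`. -/
def link (K : Finset (Finset V)) (v : V) : Finset (Finset V) :=
  K.filter (fun F => v ∉ F ∧ insert v F ∈ K)

/-- A complex is pure if all of its facets have the same dimension. -/
def IsPure (K : Finset (Finset V)) : Prop :=
  ∀ F ∈ facets K, ∀ G ∈ facets K, F.card = G.card

lemma mem_facets_iff (K : Finset (Finset V)) (F : Finset V) :
    F ∈ facets K ↔ F ∈ K ∧ ∀ G ∈ K, F ⊆ G → F = G := by
  classical
  unfold facets
  rw [Finset.mem_filter]

def GoodL (l : List (Finset V)) : Prop :=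
  ∀ i (h : i < l.length), i ≠ 0 →
    ∃ j, ∃ hj : j < l.length, j < i ∧ ((l[i]'h) ∩ (l[j]'hj)).Nonempty

lemma extend_good (E : Finset (Finset V))
    (hconn : ∀ e ∈ E, ∀ f ∈ E,
      Relation.ReflTransGen (fun x y => y ∈ E ∧ (x ∩ y).Nonempty) e f) :
    ∀ n (l : List (Finset V)), l ≠ [] → l.Nodup → l.toFinset ⊆ E →
      (E \ l.toFinset).card = n → GoodL l →
      ∃ l', l'.Nodup ∧ l'.toFinset = E ∧ GoodL l' := by
  intro n
  induction n with
  | zero =>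
    intro l hne hnd hsub hcard hg
    have hempty : E \ l.toFinset = ∅ := Finset.card_eq_zero.1 hcard
    refine ⟨l, hnd, subset_antisymm hsub (fun x hx => ?_), hg⟩
    by_contra hx'
    have : x ∈ E \ l.toFinset := Finset.mem_sdiff.2 ⟨hx, hx'⟩
    simp [hempty] at this
  | succ n ih =>
    intro l hne hnd hsub hcard hg
    have hdiff : (E \ l.toFinset).Nonempty := by
      rw [← Finset.card_pos, hcard]; omega
    -- find f in E \ S sharing a vertex with some e in S
    have key : ∃ f ∈ E \ l.toFinset, ∃ e ∈ l.toFinset, (e ∩ f).Nonempty := by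
      by_contra hno
      push_neg at hno
      obtain ⟨f0, hf0⟩ := hdiff
      obtain ⟨e0, he0⟩ : ∃ e0, e0 ∈ l.toFinset := by
        cases l with
        | nil => exact absurd rfl hne
        | cons a t => exact ⟨a, by simp⟩
      have he0E : e0 ∈ E := hsub he0
      have hf0E : f0 ∈ E := (Finset.mem_sdiff.1 hf0).1
      have hreach := hconn e0 he0E f0 hf0E
      have closed : ∀ z, Relation.ReflTransGen
          (fun x y => y ∈ E ∧ (x ∩ y).Nonempty) e0 z → z ∈ l.toFinset := by
        intro z hz
        induction hz with
        | refl => exact he0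
        | tail _ hstep ih2 =>
          rename_i b c _
          by_contra hc
          exact hstep.2.ne_empty (hno c (Finset.mem_sdiff.2 ⟨hstep.1, hc⟩) b ih2)
      exact (Finset.mem_sdiff.1 hf0).2 (closed f0 hreach)
    obtain ⟨f, hf, e, he, hef⟩ := key
    have hfE : f ∈ E := (Finset.mem_sdiff.1 hf).1
    have hfnl : f ∉ l.toFinset := (Finset.mem_sdiff.1 hf).2
    refine ih (l ++ [f]) (by simp) ?_ ?_ ?_ ?_
    · rw [List.nodup_append]
      exact ⟨hnd, List.nodup_singleton f, by
        intro a ha b hb hab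
        simp at hb
        subst hb
        subst hab
        exact hfnl (List.mem_toFinset.2 ha)⟩
    · intro x hx
      rw [List.mem_toFinset, List.mem_append] at hx
      rcases hx with hx | hx
      · exact hsub (List.mem_toFinset.2 hx)
      · simp at hx; subst hx; exact hfE
    · have h3 : E \ (l ++ [f]).toFinset = (E \ l.toFinset).erase f := by
        ext x
        simp only [Finset.mem_sdiff, Finset.mem_erase, List.mem_toFinset,
          List.mem_append, List.mem_singleton]
        tauto
      rw [h3, Finset.card_erase_of_mem (Finset.mem_sdiff.2 ⟨hfE, hfnl⟩), hcard]
      omega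
    · intro i h hi0
      have hlen : (l ++ [f]).length = l.length + 1 := by simp
      rcases lt_or_ge i l.length with hlt | hge
      · obtain ⟨j, hj, hji, hshare⟩ := hg i hlt hi0
        refine ⟨j, by simp; omega, hji, ?_⟩
        rwa [List.getElem_append_left hlt, List.getElem_append_left hj]
      · have hieq : i = l.length := by rw [hlen] at h; omega
        subst hieq
        obtain ⟨j, hj, hje⟩ := List.mem_iff_getElem.1 (List.mem_toFinset.1 he)
        have hlpos : 0 < l.length := by
          cases l with
          | nil => exact absurd rfl hne
          | cons a t => simp
        refine ⟨j, by simp; omega, hj, ?_⟩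
        have h1 : (l ++ [f])[l.length]'h = f := by
          simp
        have h2 : (l ++ [f])[j]'(by simp; omega) = l[j]'hj :=
          List.getElem_append_left hj
        rw [h1, h2, hje, Finset.inter_comm]
        exact hef


lemma exists_good_list (E : Finset (Finset V)) (hE : E.Nonempty)
    (hconn : ∀ e ∈ E, ∀ f ∈ E,
      Relation.ReflTransGen (fun x y => y ∈ E ∧ (x ∩ y).Nonempty) e f) :
    ∃ l : List (Finset V), l.Nodup ∧ l.toFinset = E ∧ GoodL l := by
  obtain ⟨e, he⟩ := hE
  refine extend_good E hconn (E \ ({e} : List (Finset V)).toFinset).card [e]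
    (by simp) (by simp) ?_ rfl ?_
  · intro x hx
    simp at hx
    subst hx
    exact he
  · intro i h hi0
    simp at h
    omega

lemma shellable_of_conn (K : Finset (Finset V)) (hK : IsComplex K)
    (hdim : ∀ F ∈ K, F.card ≤ 2) (hE : ∃ F ∈ K, F.card = 2)
    (hconn : ∀ e ∈ K.filter (fun F => F.card = 2), ∀ f ∈ K.filter (fun F => F.card = 2),
      Relation.ReflTransGen
        (fun x y => y ∈ K.filter (fun F => F.card = 2) ∧ (x ∩ y).Nonempty) e f) :
    Shellable K := by
  classical
  set E := K.filter (fun F => F.card = 2) with hEdef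
  obtain ⟨F0, hF0K, hF02⟩ := hE
  have hF0E : F0 ∈ E := Finset.mem_filter.2 ⟨hF0K, hF02⟩
  have hEne : E.Nonempty := ⟨F0, hF0E⟩
  have hEfac : E ⊆ facets K := by
    intro g hg
    rw [hEdef, Finset.mem_filter] at hg
    refine (mem_facets_iff K g).2 ⟨hg.1, ?_⟩
    intro G hG hsub
    exact Finset.eq_of_subset_of_card_le hsub (by rw [hg.2]; exact hdim G hG)
  have hiso : ∀ F ∈ facets K, F ∉ E → F.card = 1 := by
    intro F hF hFE
    obtain ⟨hFK, hmax⟩ := (mem_facets_iff K F).1 hF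
    have h2 := hdim F hFK
    have hne2 : F.card ≠ 2 := fun h => hFE (Finset.mem_filter.2 ⟨hFK, h⟩)
    have hne0 : F.card ≠ 0 := by
      intro h
      have hFemp : F = ∅ := Finset.card_eq_zero.1 h
      have := hmax F0 hF0K (by rw [hFemp]; exact Finset.empty_subset _)
      rw [← this] at hF02
      omega
    omega
  obtain ⟨le, hlend, hlefin, hgood⟩ := exists_good_list E hEne hconn
  set li := (facets K \ E).toList with hlidef
  set L := le ++ li with hLdef
  have hLfin : L.toFinset = facets K := by
    rw [hLdef, List.toFinset_append, hlefin, hlidef, Finset.toList_toFinset]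
    exact Finset.union_sdiff_of_subset hEfac
  have hLnd : L.Nodup := by
    rw [hLdef, List.nodup_append]
    refine ⟨hlend, Finset.nodup_toList _, ?_⟩
    intro a ha b hb hab
    subst hab
    have haE : a ∈ E := by rw [← hlefin]; exact List.mem_toFinset.2 ha
    have : a ∈ facets K \ E := by
      rw [hlidef] at hb; exact (Finset.mem_toList).1 hb
    exact (Finset.mem_sdiff.1 this).2 haE
  have hget : ∀ k : Fin L.length, L.get k ∈ facets K := by
    intro k
    rw [← hLfin]
    exact List.mem_toFinset.2 (L.get_mem k)
  refine ⟨L, hLnd, hLfin, ?_⟩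
  intro i hi0 G hGsub hocc
  obtain ⟨j', hj'i, hGj'⟩ := hocc
  -- G cannot be the whole facet
  have hGne : G ≠ L.get i := by
    intro h
    subst h
    have := ((mem_facets_iff K _).1 (hget i)).2 (L.get j')
      ((mem_facets_iff K _).1 (hget j')).1 hGj'
    have := (hLnd.get_inj_iff).1 this.symm
    rw [this] at hj'i
    exact lt_irrefl _ hj'i
  have hGlt : G.card < (L.get i).card :=
    Finset.card_lt_card (lt_of_le_of_ne hGsub hGne)
  rcases lt_or_ge i.1 le.length with hlt | hge
  · -- an edge
    have hLi : L.get i = le[i.1]'hlt := by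
      rw [List.get_eq_getElem]
      exact List.getElem_append_left hlt
    have hiE : le[i.1]'hlt ∈ E := by
      rw [← hlefin]
      exact List.mem_toFinset.2 (List.getElem_mem _)
    have hi2 : (L.get i).card = 2 := by
      rw [hLi]
      exact (Finset.mem_filter.1 hiE).2
    by_cases hGemp : G = ∅
    · obtain ⟨j0, hj0, hj0i, hsh⟩ := hgood i.1 hlt hi0
      obtain ⟨v, hv⟩ := hsh
      rw [Finset.mem_inter] at hv
      have hj0L : j0 < L.length := by
        rw [hLdef]; simp; omega
      refine ⟨{v}, by simp [hGemp], ?_, by rw [hi2]; simp, ⟨j0, hj0L⟩, ?_, ?_⟩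
      · rw [hLi]; simpa using hv.1
      · exact hj0i
      · have heq : L.get ⟨j0, hj0L⟩ = le[j0]'hj0 := List.getElem_append_left hj0
        rw [heq]
        simpa using hv.2
    · have hG1 : G.card = 1 := by
        have : 0 < G.card := Finset.card_pos.2 (Finset.nonempty_iff_ne_empty.2 hGemp)
        omega
      exact ⟨G, subset_rfl, hGsub, by rw [hG1, hi2], j', hj'i, hGj'⟩
  · -- an isolated vertex
    have hisub : i.1 - le.length < li.length := by
      have h2 : (i : ℕ) < L.length := i.2
      have hlen : L.length = le.length + li.length := List.length_append
      omega
    have hLi : L.get i = li[i.1 - le.length]'hisub := by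
      rw [List.get_eq_getElem]
      exact List.getElem_append_right hge
    have hmem : li[i.1 - le.length]'hisub ∈ facets K \ E := by
      rw [hlidef] at *
      exact (Finset.mem_toList).1 (List.getElem_mem _)
    have hi1 : (L.get i).card = 1 := by
      rw [hLi]
      exact hiso _ (Finset.mem_sdiff.1 hmem).1 (Finset.mem_sdiff.1 hmem).2
    have hGemp : G = ∅ := by
      rw [hi1] at hGlt
      exact Finset.card_eq_zero.1 (by omega)
    exact ⟨∅, by simp [hGemp], Finset.empty_subset _, by rw [hi1]; simp, j', hj'i,
      Finset.empty_subset _⟩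

lemma not_shellable_pair (K : Finset (Finset V)) (e f : Finset V)
    (hef : e ≠ f) (hd : e ∩ f = ∅) (he2 : e.card = 2) (hf2 : f.card = 2)
    (hfac : facets K = {e, f}) : ¬ Shellable K := by
  rintro ⟨L, hnd, hfin, hcond⟩
  have hlen : L.length = 2 := by
    have h := List.toFinset_card_of_nodup hnd
    rw [hfin, hfac, Finset.card_insert_of_notMem (by simp [hef]),
      Finset.card_singleton] at h
    omega
  have h1 : (1 : ℕ) < L.length := by omega
  have h0 : (0 : ℕ) < L.length := by omega
  obtain ⟨H, -, hHi, hHcard, j, hji, hHj⟩ :=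
    hcond ⟨1, h1⟩ (by simp) ∅ (Finset.empty_subset _)
      ⟨⟨0, h0⟩, by simp [Fin.lt_def], Finset.empty_subset _⟩
  have hj0 : j = ⟨0, h0⟩ := by
    apply Fin.ext
    have := hji
    rw [Fin.lt_def] at this
    simp at this ⊢
    omega
  subst hj0
  have hmi : L.get ⟨1, h1⟩ ∈ ({e, f} : Finset (Finset V)) := by
    rw [← hfac, ← hfin]; exact List.mem_toFinset.2 (L.get_mem ⟨1, h1⟩)
  have hmj : L.get ⟨0, h0⟩ ∈ ({e, f} : Finset (Finset V)) := by
    rw [← hfac, ← hfin]; exact List.mem_toFinset.2 (L.get_mem ⟨0, h0⟩)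
  have hne : L.get ⟨1, h1⟩ ≠ L.get ⟨0, h0⟩ := by
    intro h
    have := (hnd.get_inj_iff).1 h
    simp [Fin.ext_iff] at this
  simp only [Finset.mem_insert, Finset.mem_singleton] at hmi hmj
  have hHsub : H ⊆ e ∩ f := by
    intro x hx
    rw [Finset.mem_inter]
    rcases hmi with h | h <;> rcases hmj with h' | h'
    · exact absurd (h.trans h'.symm) hne
    · exact ⟨h ▸ hHi hx, h' ▸ hHj hx⟩
    · exact ⟨h' ▸ hHj hx, h ▸ hHi hx⟩
    · exact absurd (h.trans h'.symm) hne
  rw [hd] at hHsub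
  have hH0 : H.card = 0 := by
    rw [Finset.card_eq_zero]
    exact Finset.subset_empty.1 hHsub
  have hci : (L.get ⟨1, h1⟩).card = 2 := by
    rcases hmi with h | h
    · rw [h, he2]
    · rw [h, hf2]
  omega


/-- The only 1-dimensional obstruction to shellability is the pair of disjoint edges:
every nonshellable 1-dimensional complex which is not (up to the choice of the four distinct
vertices) the complex with facets `{a,b}`, `{c,d}` has a nonshellable proper induced
subcomplex. -/
theorem stmt2 (K : Finset (Finset V)) (hK : IsComplex K)
    (hdim : (∀ F ∈ K, F.card ≤ 2) ∧ ∃ F ∈ K, F.card = 2)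
    (hns : ¬ Shellable K)
    (hne : ¬ ∃ a b c d : V, a ≠ b ∧ a ≠ c ∧ a ≠ d ∧ b ≠ c ∧ b ≠ d ∧ c ≠ d ∧
      K = ({a, b} : Finset V).powerset ∪ ({c, d} : Finset V).powerset) :
    ∃ U ⊂ verts K, ¬ Shellable (inducedSub K U) := by
  classical
  obtain ⟨hdim2, hEex⟩ := hdim
  have hconn' : ¬ (∀ e ∈ K.filter (fun F => F.card = 2), ∀ f ∈ K.filter (fun F => F.card = 2),
      Relation.ReflTransGen
        (fun x y => y ∈ K.filter (fun F => F.card = 2) ∧ (x ∩ y).Nonempty) e f) := by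
    intro hc
    exact hns (shellable_of_conn K hK hdim2 hEex hc)
  push_neg at hconn'
  obtain ⟨e, heE, f, hfE, hreach⟩ := hconn'
  have heK : e ∈ K := (Finset.mem_filter.1 heE).1
  have he2 : e.card = 2 := (Finset.mem_filter.1 heE).2
  have hfK : f ∈ K := (Finset.mem_filter.1 hfE).1
  have hf2 : f.card = 2 := (Finset.mem_filter.1 hfE).2
  have hd : e ∩ f = ∅ := by
    by_contra h
    exact hreach (Relation.ReflTransGen.single ⟨hfE, Finset.nonempty_iff_ne_empty.2 h⟩)
  have hef : e ≠ f := by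
    intro h
    subst h
    exact hreach Relation.ReflTransGen.refl
  have hdisj : ∀ x, x ∈ e → x ∈ f → False := by
    intro x h1 h2
    have : x ∈ e ∩ f := Finset.mem_inter.2 ⟨h1, h2⟩
    rw [hd] at this
    simp at this
  set U := e ∪ f with hU
  have hcross : ∀ g ∈ K, g.card = 2 → g ⊆ U → g = e ∨ g = f := by
    intro g hgK hg2 hgU
    have hgE : g ∈ K.filter (fun F => F.card = 2) := Finset.mem_filter.2 ⟨hgK, hg2⟩
    by_cases hge : (g ∩ e).Nonempty
    · by_cases hgf : (g ∩ f).Nonempty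
      · exact absurd ((Relation.ReflTransGen.single
          ⟨hgE, by rwa [Finset.inter_comm] at hge⟩).tail ⟨hfE, hgf⟩) hreach
      · left
        refine Finset.eq_of_subset_of_card_le (fun x hx => ?_) (by omega)
        rcases Finset.mem_union.1 (hgU hx) with h | h
        · exact h
        · exact absurd (Finset.mem_inter.2 ⟨hx, h⟩)
            (by rw [Finset.not_nonempty_iff_eq_empty.1 hgf]; simp)
    · right
      refine Finset.eq_of_subset_of_card_le (fun x hx => ?_) (by omega)
      rcases Finset.mem_union.1 (hgU hx) with h | h
      · exact absurd (Finset.mem_inter.2 ⟨hx, h⟩)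
          (by rw [Finset.not_nonempty_iff_eq_empty.1 hge]; simp)
      · exact h
  have hsub01 : ∀ F : Finset V, F ⊆ U → F.card < 2 → F ⊆ e ∨ F ⊆ f := by
    intro F hFU hlt
    rcases Finset.eq_empty_or_nonempty F with hemp | ⟨w, hw⟩
    · left; rw [hemp]; exact Finset.empty_subset _
    · have hF1 : F = {w} := Finset.eq_singleton_iff_unique_mem.2
        ⟨hw, fun y hy => Finset.card_le_one.1 (by omega) y hy w hw⟩
      rcases Finset.mem_union.1 (hFU hw) with h | h
      · left; rw [hF1]; exact Finset.singleton_subset_iff.2 h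
      · right; rw [hF1]; exact Finset.singleton_subset_iff.2 h
  have heInd : e ∈ inducedSub K U := Finset.mem_filter.2 ⟨heK, Finset.subset_union_left⟩
  have hfInd : f ∈ inducedSub K U := Finset.mem_filter.2 ⟨hfK, Finset.subset_union_right⟩
  have hfacInd : facets (inducedSub K U) = {e, f} := by
    ext F
    rw [mem_facets_iff]
    constructor
    · rintro ⟨hFind, hmax⟩
      obtain ⟨hFK, hFU⟩ := Finset.mem_filter.1 hFind
      have hFc := hdim2 F hFK
      rcases Nat.lt_or_ge F.card 2 with hlt | hge2
      · exfalso
        rcases hsub01 F hFU hlt with h | h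
        · have := hmax e heInd h
          rw [this, he2] at hlt
          omega
        · have := hmax f hfInd h
          rw [this, hf2] at hlt
          omega
      · have h2 : F.card = 2 := le_antisymm hFc hge2
        rcases hcross F hFK h2 hFU with h | h <;> simp [h]
    · intro hFef
      have hFef' : F = e ∨ F = f := by simpa using hFef
      rcases hFef' with h | h <;> subst h
      · refine ⟨heInd, fun G hG hsub => ?_⟩
        exact Finset.eq_of_subset_of_card_le hsub
          (by rw [he2]; exact hdim2 G (Finset.mem_filter.1 hG).1)
      · refine ⟨hfInd, fun G hG hsub => ?_⟩
        exact Finset.eq_of_subset_of_card_le hsub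
          (by rw [hf2]; exact hdim2 G (Finset.mem_filter.1 hG).1)
  have hnsInd : ¬ Shellable (inducedSub K U) :=
    not_shellable_pair _ e f hef hd he2 hf2 hfacInd
  have hUsub : U ⊆ verts K := by
    intro x hx
    rcases Finset.mem_union.1 hx with h | h
    · exact Finset.mem_sup.2 ⟨e, heK, h⟩
    · exact Finset.mem_sup.2 ⟨f, hfK, h⟩
  by_cases hUeq : U = verts K
  · exfalso
    apply hne
    obtain ⟨a, b, hab, habe⟩ := Finset.card_eq_two.1 he2
    obtain ⟨c, d, hcd, hcdf⟩ := Finset.card_eq_two.1 hf2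
    have ha : a ∈ e := by rw [habe]; simp
    have hb : b ∈ e := by rw [habe]; simp
    have hc : c ∈ f := by rw [hcdf]; simp
    have hd' : d ∈ f := by rw [hcdf]; simp
    refine ⟨a, b, c, d, hab, fun h => hdisj a ha (by rw [h]; exact hc),
      fun h => hdisj a ha (by rw [h]; exact hd'),
      fun h => hdisj b hb (by rw [h]; exact hc),
      fun h => hdisj b hb (by rw [h]; exact hd'), hcd, ?_⟩
    rw [← habe, ← hcdf]
    ext F
    simp only [Finset.mem_union, Finset.mem_powerset]
    constructor
    · intro hFK
      have hFU : F ⊆ U := by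
        intro x hx
        rw [hUeq]
        exact Finset.mem_sup.2 ⟨F, hFK, hx⟩
      rcases Nat.lt_or_ge F.card 2 with hlt | hge2
      · exact hsub01 F hFU hlt
      · have h2 : F.card = 2 := le_antisymm (hdim2 F hFK) hge2
        rcases hcross F hFK h2 hFU with h | h
        · left; rw [h]
        · right; rw [h]
    · rintro (h | h)
      · exact hK e heK F h
      · exact hK f hfK F h
  · exact ⟨U, Finset.ssubset_iff_subset_ne.2 ⟨hUsub, hUeq⟩, hnsInd⟩
end

section
/- For every positive integer d, there exists a d-dimensional obstruction to shellability; specifically, the (d-1)-skeleton of the simplex on {1,...,d+3} together with the two d-faces {1,...,d+1} and {3,...,d+3} is nonshellable while all of its proper induced subcomplexes are shellable. -/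
open Finset

variable {V : Type*} [DecidableEq V]

/-- The `(d-1)`-skeleton of the simplex on vertex set `{1, ..., n}` (in `ℕ`):
all subsets of cardinality at most `d`. -/
def skel (n d : ℕ) : Finset (Finset ℕ) :=
  (Finset.Icc 1 n).powerset.filter (fun F => F.card ≤ d)

section ShellAux

def fkey (S : Finset ℕ) : ℕ := ∑ x ∈ S, 2 ^ x

lemma fkey_lt_two_pow {S : Finset ℕ} {m : ℕ} (h : ∀ x ∈ S, x < m) : fkey S < 2 ^ m := by
  have hsub : S ⊆ Finset.range m := fun x hx => Finset.mem_range.2 (h x hx)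
  have h1 : fkey S ≤ ∑ x ∈ Finset.range m, 2 ^ x :=
    Finset.sum_le_sum_of_subset hsub
  have h2 : ∀ n : ℕ, ∑ x ∈ Finset.range n, 2 ^ x = 2 ^ n - 1 := by
    intro n
    induction n with
    | zero => simp
    | succ n ih => rw [Finset.sum_range_succ, ih]; have := Nat.one_le_two_pow (n := n); omega
  have h2 := h2 m
  have : (0:ℕ) < 2 ^ m := Nat.pow_pos (by norm_num)
  omega

lemma fkey_split (S T : Finset ℕ) : fkey S = fkey (S ∩ T) + fkey (S \ T) :=
  (Finset.sum_inter_add_sum_sdiff S T _).symm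

lemma fkey_lt' (S T : Finset ℕ) (m : ℕ) (hmS : m ∈ S) (hmT : m ∉ T)
    (h : ∀ x ∈ T \ S, x < m) : fkey T < fkey S := by
  have hmS' : m ∈ S \ T := Finset.mem_sdiff.2 ⟨hmS, hmT⟩
  have h1 : fkey (T \ S) < 2 ^ m := fkey_lt_two_pow h
  have h2 : 2 ^ m ≤ fkey (S \ T) :=
    Finset.single_le_sum (fun x _ => Nat.zero_le _) hmS'
  have e1 := fkey_split S T
  have e2 := fkey_split T S
  rw [Finset.inter_comm T S] at e2
  omega

/-- dichotomy: for distinct S T, either the max of the symm diff witnesses key T < key S or vice versa -/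
lemma fkey_dichotomy (S T : Finset ℕ) (hne : S ≠ T) :
    fkey T < fkey S ∨ fkey S < fkey T := by
  have hne' : ((S \ T) ∪ (T \ S)).Nonempty := by
    rw [Finset.nonempty_iff_ne_empty]
    intro h
    have h1 : S \ T = ∅ := Finset.union_eq_empty.1 h |>.1
    have h2 : T \ S = ∅ := Finset.union_eq_empty.1 h |>.2
    exact hne (Finset.Subset.antisymm (Finset.sdiff_eq_empty_iff_subset.1 h1)
      (Finset.sdiff_eq_empty_iff_subset.1 h2))
  set m := ((S \ T) ∪ (T \ S)).max' hne' with hm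
  have hmem := ((S \ T) ∪ (T \ S)).max'_mem hne'
  rw [Finset.mem_union] at hmem
  rcases hmem with h | h
  · left
    rw [Finset.mem_sdiff] at h
    refine fkey_lt' S T m h.1 h.2 (fun x hx => ?_)
    have hle : x ≤ m := Finset.le_max' _ _ (Finset.mem_union_right _ hx)
    have : x ≠ m := by
      rintro rfl
      exact (Finset.mem_sdiff.1 hx).2 h.1
    omega
  · right
    rw [Finset.mem_sdiff] at h
    refine fkey_lt' T S m h.1 h.2 (fun x hx => ?_)
    have hle : x ≤ m := Finset.le_max' _ _ (Finset.mem_union_left _ hx)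
    have : x ≠ m := by
      rintro rfl
      exact (Finset.mem_sdiff.1 hx).2 h.1
    omega

lemma fkey_injective : Function.Injective fkey := by
  intro S T h
  by_contra hne
  rcases fkey_dichotomy S T hne with h' | h' <;> omega

lemma fkey_exchange (S T : Finset ℕ) (hne : S ≠ T) (hc : S.card = T.card)
    (hlt : fkey T < fkey S) :
    ∃ m t, m ∈ S ∧ m ∉ T ∧ t ∈ T ∧ t ∉ S ∧
      fkey (insert t (S.erase m)) < fkey S ∧ (insert t (S.erase m)).card = S.card := by
  -- max of symm diff is in S \ T
  have hne' : ((S \ T) ∪ (T \ S)).Nonempty := by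
    rw [Finset.nonempty_iff_ne_empty]
    intro h
    have h1 : S \ T = ∅ := Finset.union_eq_empty.1 h |>.1
    have h2 : T \ S = ∅ := Finset.union_eq_empty.1 h |>.2
    exact hne (Finset.Subset.antisymm (Finset.sdiff_eq_empty_iff_subset.1 h1)
      (Finset.sdiff_eq_empty_iff_subset.1 h2))
  set m := ((S \ T) ∪ (T \ S)).max' hne' with hm
  have hmem := ((S \ T) ∪ (T \ S)).max'_mem hne'
  rw [Finset.mem_union] at hmem
  have hmem : m ∈ S \ T := by
    rcases hmem with h | h
    · exact h
    · exfalso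
      rw [Finset.mem_sdiff] at h
      have : fkey S < fkey T := by
        refine fkey_lt' T S m h.1 h.2 (fun x hx => ?_)
        have hle : x ≤ m := Finset.le_max' _ _ (Finset.mem_union_left _ hx)
        have : x ≠ m := by rintro rfl; exact (Finset.mem_sdiff.1 hx).2 h.1
        omega
      omega
  rw [Finset.mem_sdiff] at hmem
  -- pick t ∈ T \ S
  have hTS : (T \ S).Nonempty := by
    rw [Finset.nonempty_iff_ne_empty]
    intro h
    have hsub : T ⊆ S := Finset.sdiff_eq_empty_iff_subset.1 h
    exact hne ((Finset.eq_of_subset_of_card_le hsub hc.le).symm)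
  obtain ⟨t, ht⟩ := hTS
  have htT : t ∈ T := (Finset.mem_sdiff.1 ht).1
  have htS : t ∉ S := (Finset.mem_sdiff.1 ht).2
  have htm : t < m := by
    have hle : t ≤ m := Finset.le_max' _ _ (Finset.mem_union_right _ ht)
    have : t ≠ m := by rintro rfl; exact htS hmem.1
    omega
  refine ⟨m, t, hmem.1, hmem.2, htT, htS, ?_, ?_⟩
  · have h1 : fkey (insert t (S.erase m)) = 2 ^ t + fkey (S.erase m) := by
      unfold fkey
      rw [Finset.sum_insert (by simp [htS])]
    have h2 : fkey (S.erase m) + 2 ^ m = fkey S := by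
      unfold fkey
      exact Finset.sum_erase_add _ _ hmem.1
    have : (2:ℕ) ^ t < 2 ^ m := Nat.pow_lt_pow_right (by norm_num) htm
    omega
  · rw [Finset.card_insert_of_notMem (by simp [htS]), Finset.card_erase_of_mem hmem.1]
    have : 0 < S.card := Finset.card_pos.2 ⟨m, hmem.1⟩
    omega

def cle (S T : Finset ℕ) : Prop := fkey S ≤ fkey T

instance : DecidableRel cle := fun S T => inferInstanceAs (Decidable (fkey S ≤ fkey T))
instance : IsTrans (Finset ℕ) cle := ⟨fun _ _ _ h1 h2 => le_trans h1 h2⟩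
instance : IsAntisymm (Finset ℕ) cle := ⟨fun _ _ h1 h2 => fkey_injective (le_antisymm h1 h2)⟩
instance : IsTotal (Finset ℕ) cle := ⟨fun S T => le_total _ _⟩

lemma sorted_index_lt {s : Finset (Finset ℕ)} {i j : Fin (s.sort cle).length}
    (h : fkey ((s.sort cle).get i) < fkey ((s.sort cle).get j)) : i < j := by
  rcases lt_trichotomy i j with h' | h' | h'
  · exact h'
  · subst h'; exact absurd h (lt_irrefl _)
  · have := (s.pairwise_sort cle).rel_get_of_lt h'
    exact absurd h (not_lt.2 this)

lemma mem_facets {V : Type*} [DecidableEq V] {K : Finset (Finset V)} {F : Finset V} :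
    F ∈ facets K ↔ F ∈ K ∧ ∀ G ∈ K, F ⊆ G → F = G := by
  simp [facets]

lemma shellable_of_facets_singleton {V : Type*} [DecidableEq V] {K : Finset (Finset V)}
    {F : Finset V} (h : facets K = {F}) : Shellable K := by
  refine ⟨[F], List.nodup_singleton F, by simp [h], ?_⟩
  intro i hi
  have : i.1 < 1 := i.2
  omega

lemma facets_powerset {V : Type*} [DecidableEq V] (U : Finset V) :
    facets U.powerset = {U} := by
  ext F
  rw [mem_facets, Finset.mem_singleton]
  constructor
  · rintro ⟨h1, h2⟩
    exact h2 U (Finset.mem_powerset.2 (Finset.Subset.refl U)) (Finset.mem_powerset.1 h1)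
  · rintro rfl
    exact ⟨Finset.mem_powerset.2 (Finset.Subset.refl F),
      fun G hG h => Finset.Subset.antisymm h (Finset.mem_powerset.1 hG)⟩

lemma facets_skel (U : Finset ℕ) (k : ℕ) (hk : k ≤ U.card) :
    facets (U.powerset.filter (fun F => F.card ≤ k)) = U.powersetCard k := by
  ext F
  rw [mem_facets, Finset.mem_powersetCard]
  simp only [Finset.mem_filter, Finset.mem_powerset]
  constructor
  · rintro ⟨⟨hFU, hFk⟩, hmax⟩
    refine ⟨hFU, ?_⟩
    by_contra hne
    have hlt : F.card < k := lt_of_le_of_ne hFk hne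
    have : (U \ F).Nonempty := by
      rw [← Finset.card_pos, Finset.card_sdiff_of_subset hFU]
      omega
    obtain ⟨y, hy⟩ := this
    rw [Finset.mem_sdiff] at hy
    have := hmax (insert y F) ⟨Finset.insert_subset hy.1 hFU,
      by rw [Finset.card_insert_of_notMem hy.2]; omega⟩ (Finset.subset_insert _ _)
    exact hy.2 (this ▸ Finset.mem_insert_self y F)
  · rintro ⟨hFU, hFk⟩
    refine ⟨⟨hFU, hFk.le⟩, fun G hG hFG => ?_⟩
    exact Finset.eq_of_subset_of_card_le hFG (by omega)

lemma shellable_skel (U : Finset ℕ) (k : ℕ) (hk : k ≤ U.card) :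
    Shellable (U.powerset.filter (fun F => F.card ≤ k)) := by
  set s := U.powersetCard k with hs
  refine ⟨s.sort cle, s.sort_nodup cle, by rw [s.sort_toFinset cle, facets_skel U k hk], ?_⟩
  set L := s.sort cle with hL
  intro i hi G hGi ⟨j, hji, hGj⟩
  have hmemL : ∀ (i : Fin L.length), L.get i ∈ s := fun i =>
    (Finset.mem_sort cle).1 (L.get_mem i)
  have hFi := hmemL i
  have hFj := hmemL j
  rw [hs, Finset.mem_powersetCard] at hFi hFj
  have hne : L.get i ≠ L.get j := by
    intro h
    exact absurd ((L.get_mem i |> fun _ => (s.sort_nodup cle).get_inj_iff.1 h)) (Fin.ne_of_gt hji)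
  have hlt : fkey (L.get j) < fkey (L.get i) := by
    have hle : cle (L.get j) (L.get i) := (s.pairwise_sort cle).rel_get_of_lt hji
    exact lt_of_le_of_ne hle (fun h => hne (fkey_injective h.symm))
  obtain ⟨m, t, hmS, hmT, htT, htS, hkey, hcard⟩ :=
    fkey_exchange (L.get i) (L.get j) hne (by rw [hFi.2, hFj.2]) hlt
  refine ⟨(L.get i).erase m, ?_, Finset.erase_subset _ _, ?_, ?_⟩
  · intro x hx
    exact Finset.mem_erase.2 ⟨fun h => hmT (h ▸ hGj hx), hGi hx⟩
  · rw [Finset.card_erase_of_mem hmS]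
    have : 0 < (L.get i).card := Finset.card_pos.2 ⟨m, hmS⟩
    omega
  · -- the new facet insert t (erase m)
    have hmem : insert t ((L.get i).erase m) ∈ s := by
      rw [hs, Finset.mem_powersetCard]
      constructor
      · exact Finset.insert_subset (hFj.1 htT)
          ((Finset.erase_subset _ _).trans hFi.1)
      · rw [hcard, hFi.2]
    rw [← Finset.mem_sort cle, ← hL, List.mem_iff_get] at hmem
    obtain ⟨j', hj'⟩ := hmem
    refine ⟨j', ?_, hj' ▸ Finset.subset_insert _ _⟩
    exact sorted_index_lt (by rw [hj']; exact hkey)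

lemma mem_cone_iff (X : Finset ℕ) (x : ℕ) (k : ℕ) (F : Finset ℕ) :
    F ∈ (insert x X).powerset.filter (fun F => F.card ≤ k) ∪ {X} ↔
      (F ⊆ insert x X ∧ F.card ≤ k) ∨ F = X := by
  simp [Finset.mem_union, Finset.mem_filter, Finset.mem_powerset]
  exact or_comm

lemma facets_cone (X : Finset ℕ) (x : ℕ) (hx : x ∉ X) (k : ℕ) (hX : X.card = k + 1) :
    facets ((insert x X).powerset.filter (fun F => F.card ≤ k) ∪ {X}) =
      insert X (((insert x X).powersetCard k).filter (fun F => x ∈ F)) := by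
  have hUcard : (insert x X).card = k + 2 := by
    rw [Finset.card_insert_of_notMem hx, hX]
  ext F
  rw [mem_facets, Finset.mem_insert, Finset.mem_filter, Finset.mem_powersetCard]
  constructor
  · rintro ⟨hFK, hmax⟩
    rw [mem_cone_iff] at hFK
    rcases hFK with ⟨hFU, hFk⟩ | rfl
    · right
      have hxF : x ∈ F := by
        by_contra hxF
        have hFX : F ⊆ X := fun y hy => by
          rcases Finset.mem_insert.1 (hFU hy) with rfl | h
          · exact absurd hy hxF
          · exact h
        have := hmax X ((mem_cone_iff X x k X).2 (Or.inr rfl)) hFX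
        rw [this, hX] at hFk; omega
      have hcard : F.card = k := by
        by_contra hne
        have hlt : F.card < k := lt_of_le_of_ne hFk hne
        have : (insert x X \ F).Nonempty := by
          rw [← Finset.card_pos, Finset.card_sdiff_of_subset hFU]; omega
        obtain ⟨y, hy⟩ := this
        rw [Finset.mem_sdiff] at hy
        have := hmax (insert y F) ((mem_cone_iff X x k _).2 (Or.inl
          ⟨Finset.insert_subset hy.1 hFU, by rw [Finset.card_insert_of_notMem hy.2]; omega⟩))
          (Finset.subset_insert _ _)
        exact hy.2 (this ▸ Finset.mem_insert_self y F)
      exact ⟨⟨hFU, hcard⟩, hxF⟩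
    · exact Or.inl rfl
  · rintro (rfl | ⟨⟨hFU, hcard⟩, hxF⟩)
    · refine ⟨(mem_cone_iff F x k F).2 (Or.inr rfl), fun G hG hFG => ?_⟩
      rw [mem_cone_iff] at hG
      rcases hG with ⟨hGU, hGk⟩ | rfl
      · have := Finset.card_le_card hFG
        rw [hX] at this; omega
      · rfl
    · refine ⟨(mem_cone_iff X x k F).2 (Or.inl ⟨hFU, hcard.le⟩), fun G hG hFG => ?_⟩
      rw [mem_cone_iff] at hG
      rcases hG with ⟨hGU, hGk⟩ | rfl
      · exact Finset.eq_of_subset_of_card_le hFG (by omega)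
      · exact absurd (hFG hxF) hx

lemma shellable_cone (X : Finset ℕ) (x : ℕ) (hx : x ∉ X) (k : ℕ) (hX : X.card = k + 1) :
    Shellable ((insert x X).powerset.filter (fun F => F.card ≤ k) ∪ {X}) := by
  set s := ((insert x X).powersetCard k).filter (fun F => x ∈ F) with hs
  set T := s.sort cle with hT
  have hmemT : ∀ (i : Fin T.length), T.get i ∈ s := fun i =>
    (Finset.mem_sort cle).1 (T.get_mem i)
  have hmemT' : ∀ (i : Fin T.length),
      T.get i ⊆ insert x X ∧ (T.get i).card = k ∧ x ∈ T.get i := by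
    intro i
    have := hmemT i
    rw [hs, Finset.mem_filter, Finset.mem_powersetCard] at this
    exact ⟨this.1.1, this.1.2, this.2⟩
  refine ⟨X :: T, ?_, ?_, ?_⟩
  · refine List.nodup_cons.2 ⟨fun hmem => ?_, s.sort_nodup cle⟩
    rw [hT, Finset.mem_sort cle, hs, Finset.mem_filter] at hmem
    exact hx hmem.2
  · rw [List.toFinset_cons, hT, Finset.sort_toFinset _ cle, facets_cone X x hx k hX]
  · rintro ⟨ival, hilen⟩ hi G hGi ⟨⟨jval, hjlen⟩, hji, hGj⟩
    rcases ival with _ | n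
    · exact absurd rfl hi
    have hnT : n < T.length := by simpa using hilen
    have hgi : G ⊆ T.get ⟨n, hnT⟩ := hGi
    obtain ⟨hFU, hFc, hxF⟩ := hmemT' ⟨n, hnT⟩
    rcases jval with _ | n'
    · -- previous facet is X
      have hgj : G ⊆ X := hGj
      have hxG : x ∉ G := fun h => hx (hgj h)
      refine ⟨(T.get ⟨n, hnT⟩).erase x, ?_, Finset.erase_subset _ _, ?_, ⟨0, hjlen⟩, ?_, ?_⟩
      · intro y hy
        exact Finset.mem_erase.2 ⟨fun h => hxG (h ▸ hy), hgi hy⟩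
      · rw [Finset.card_erase_of_mem hxF]
        have : 0 < (T.get ⟨n, hnT⟩).card := Finset.card_pos.2 ⟨x, hxF⟩
        exact (Nat.succ_pred_eq_of_pos this)
      · exact Fin.mk_lt_mk.2 (Nat.succ_pos n)
      · show (T.get ⟨n, hnT⟩).erase x ⊆ X
        intro y hy
        rw [Finset.mem_erase] at hy
        rcases Finset.mem_insert.1 (hFU hy.2) with rfl | h
        · exact absurd rfl hy.1
        · exact h
    · -- previous facet is in T
      have hn'T : n' < T.length := by simpa using hjlen
      have hgj : G ⊆ T.get ⟨n', hn'T⟩ := hGj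
      obtain ⟨hF'U, hF'c, hxF'⟩ := hmemT' ⟨n', hn'T⟩
      have hji' : (⟨n', hn'T⟩ : Fin T.length) < ⟨n, hnT⟩ := by
        rw [Fin.mk_lt_mk]
        exact Nat.succ_lt_succ_iff.1 hji
      have hne : T.get ⟨n, hnT⟩ ≠ T.get ⟨n', hn'T⟩ := by
        intro h
        exact absurd ((s.sort_nodup cle).get_inj_iff.1 h) (Fin.ne_of_gt hji')
      have hlt : fkey (T.get ⟨n', hn'T⟩) < fkey (T.get ⟨n, hnT⟩) := by
        have hle : cle (T.get ⟨n', hn'T⟩) (T.get ⟨n, hnT⟩) :=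
          (s.pairwise_sort cle).rel_get_of_lt hji'
        exact lt_of_le_of_ne hle (fun h => hne (fkey_injective h.symm))
      obtain ⟨m, t, hmS, hmT, htT, htS, hkey, hcard⟩ :=
        fkey_exchange _ _ hne (by rw [hFc, hF'c]) hlt
      have hmx : m ≠ x := fun h => hmT (h ▸ hxF')
      refine ⟨(T.get ⟨n, hnT⟩).erase m, ?_, Finset.erase_subset _ _, ?_, ?_⟩
      · intro y hy
        exact Finset.mem_erase.2 ⟨fun h => hmT (h ▸ hgj hy), hgi hy⟩
      · rw [Finset.card_erase_of_mem hmS]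
        have : 0 < (T.get ⟨n, hnT⟩).card := Finset.card_pos.2 ⟨m, hmS⟩
        exact (Nat.succ_pred_eq_of_pos this)
      · have hmem : insert t ((T.get ⟨n, hnT⟩).erase m) ∈ s := by
          rw [hs, Finset.mem_filter, Finset.mem_powersetCard]
          refine ⟨⟨Finset.insert_subset (hF'U htT) ((Finset.erase_subset _ _).trans hFU), ?_⟩, ?_⟩
          · rw [hcard, hFc]
          · exact Finset.mem_insert_of_mem (Finset.mem_erase.2 ⟨hmx.symm, hxF⟩)
        rw [← Finset.mem_sort cle, ← hT, List.mem_iff_get] at hmem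
        obtain ⟨j', hj'⟩ := hmem
        have hj'lt : j' < (⟨n, hnT⟩ : Fin T.length) :=
          sorted_index_lt (by rw [hj']; exact hkey)
        refine ⟨⟨j'.1 + 1, by simpa using Nat.succ_lt_succ j'.2⟩, ?_, ?_⟩
        · exact Fin.mk_lt_mk.2 (Nat.succ_lt_succ hj'lt)
        · show (T.get ⟨n, hnT⟩).erase m ⊆ T.get ⟨j'.1, j'.2⟩
          rw [hj']
          exact Finset.subset_insert _ _

lemma shelling_not_late {K : Finset (Finset ℕ)} {X Y : Finset ℕ}
    (hmax : ∀ H, X ∩ Y ⊆ H → H ⊆ Y → H.card + 1 = Y.card → ∀ F ∈ facets K, H ⊆ F → F = Y)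
    {L : List (Finset ℕ)} (hL : IsShelling K L) (iX iY : Fin L.length)
    (hgX : L.get iX = X) (hgY : L.get iY = Y) : ¬ iX < iY := by
  intro hlt
  obtain ⟨hnd, htf, hcond⟩ := hL
  have hY0 : iY.1 ≠ 0 := by
    intro h
    have : iX.1 < iY.1 := hlt
    omega
  obtain ⟨H, hGH, hHY, hHc, j, hj, hHj⟩ := hcond iY hY0 (X ∩ Y)
    (by rw [hgY]; exact Finset.inter_subset_right)
    ⟨iX, hlt, by rw [hgX]; exact Finset.inter_subset_left⟩
  rw [hgY] at hHY hHc
  have hFfac : L.get j ∈ facets K := by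
    rw [← htf]
    exact List.mem_toFinset.2 (L.get_mem j)
  have hje : L.get j = Y := hmax H hGH hHY hHc _ hFfac hHj
  have : j = iY := hnd.get_inj_iff.1 (by rw [hje, hgY])
  rw [this] at hj
  exact lt_irrefl _ hj


end ShellAux

/-- For every positive `d` there is a `d`-dimensional obstruction to shellability:
the `(d-1)`-skeleton of the simplex on `{1, ..., d+3}` together with the two `d`-faces
`{1, ..., d+1}` and `{3, ..., d+3}` is nonshellable, while all of its proper induced
subcomplexes are shellable. -/
theorem stmt5 (d : ℕ) (hd : 0 < d) :
    ¬ Shellable (skel (d + 3) d ∪ {Finset.Icc 1 (d + 1), Finset.Icc 3 (d + 3)}) ∧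
      ∀ U ⊂ verts (skel (d + 3) d ∪ {Finset.Icc 1 (d + 1), Finset.Icc 3 (d + 3)}),
        Shellable (inducedSub (skel (d + 3) d ∪ {Finset.Icc 1 (d + 1), Finset.Icc 3 (d + 3)}) U) := by
  set A : Finset ℕ := Finset.Icc 1 (d + 1) with hA
  set B : Finset ℕ := Finset.Icc 3 (d + 3) with hB
  set K : Finset (Finset ℕ) := skel (d + 3) d ∪ {A, B} with hK
  have hcardA : A.card = d + 1 := by rw [hA, Nat.card_Icc]; omega
  have hcardB : B.card = d + 1 := by rw [hB, Nat.card_Icc]; omega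
  have hmemK : ∀ F : Finset ℕ, F ∈ K ↔ (F ⊆ Finset.Icc 1 (d + 3) ∧ F.card ≤ d) ∨ F = A ∨ F = B := by
    intro F
    simp only [hK, skel, Finset.mem_union, Finset.mem_filter, Finset.mem_powerset,
      Finset.mem_insert, Finset.mem_singleton]
  have hsubA : A ⊆ Finset.Icc 1 (d + 3) := Finset.Icc_subset_Icc le_rfl (by omega)
  have hsubB : B ⊆ Finset.Icc 1 (d + 3) := Finset.Icc_subset_Icc (by omega) le_rfl
  have hAB : A ∩ B = Finset.Icc 3 (d + 1) := by
    ext y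
    simp only [hA, hB, Finset.mem_inter, Finset.mem_Icc]
    omega
  have hcardAB : (A ∩ B).card = d - 1 := by rw [hAB, Nat.card_Icc]; omega
  have hAneB : A ≠ B := by
    intro h
    have h1 : (1 : ℕ) ∈ A := by rw [hA]; simp [Finset.mem_Icc]
    rw [h, hB, Finset.mem_Icc] at h1
    omega
  -- facets
  have hfacA : A ∈ facets K := by
    rw [mem_facets]
    refine ⟨(hmemK A).2 (Or.inr (Or.inl rfl)), fun G hG hAG => ?_⟩
    rcases (hmemK G).1 hG with ⟨_, hGc⟩ | rfl | rfl
    · have := Finset.card_le_card hAG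
      omega
    · rfl
    · exfalso
      have h1 : (1 : ℕ) ∈ A := by rw [hA]; simp [Finset.mem_Icc]
      have := hAG h1
      rw [hB, Finset.mem_Icc] at this
      omega
  have hfacB : B ∈ facets K := by
    rw [mem_facets]
    refine ⟨(hmemK B).2 (Or.inr (Or.inr rfl)), fun G hG hBG => ?_⟩
    rcases (hmemK G).1 hG with ⟨_, hGc⟩ | rfl | rfl
    · have := Finset.card_le_card hBG
      omega
    · exfalso
      have h1 : (d + 3 : ℕ) ∈ B := by rw [hB, Finset.mem_Icc]; omega
      have := hBG h1
      rw [hA, Finset.mem_Icc] at this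
      omega
    · rfl
  -- maximality conditions
  have hmaxB : ∀ H : Finset ℕ, A ∩ B ⊆ H → H ⊆ B → H.card + 1 = B.card →
      ∀ F ∈ facets K, H ⊆ F → F = B := by
    intro H hABH hHB hHc F hF hHF
    have hHcard : H.card = d := by omega
    obtain ⟨w, hw⟩ : (H \ (A ∩ B)).Nonempty := by
      rw [← Finset.card_pos, Finset.card_sdiff_of_subset hABH]
      omega
    rw [Finset.mem_sdiff, hAB, Finset.mem_Icc] at hw
    have hwB : w ∈ B := hHB hw.1
    rw [hB, Finset.mem_Icc] at hwB
    have hwgt : d + 1 < w := by omega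
    rw [mem_facets] at hF
    rcases (hmemK F).1 hF.1 with ⟨_, hFc⟩ | rfl | rfl
    · exfalso
      have hFH : F = H := (Finset.eq_of_subset_of_card_le hHF (by omega)).symm
      have := hF.2 B ((hmemK B).2 (Or.inr (Or.inr rfl))) (hFH ▸ hHB)
      rw [this] at hFc
      omega
    · exfalso
      have := hHF hw.1
      rw [hA, Finset.mem_Icc] at this
      omega
    · rfl
  have hmaxA : ∀ H : Finset ℕ, B ∩ A ⊆ H → H ⊆ A → H.card + 1 = A.card →
      ∀ F ∈ facets K, H ⊆ F → F = A := by
    intro H hABH hHA hHc F hF hHF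
    rw [Finset.inter_comm] at hABH
    have hHcard : H.card = d := by omega
    obtain ⟨w, hw⟩ : (H \ (A ∩ B)).Nonempty := by
      rw [← Finset.card_pos, Finset.card_sdiff_of_subset hABH]
      omega
    rw [Finset.mem_sdiff, hAB, Finset.mem_Icc] at hw
    have hwA : w ∈ A := hHA hw.1
    rw [hA, Finset.mem_Icc] at hwA
    have hwlt : w < 3 := by omega
    rw [mem_facets] at hF
    rcases (hmemK F).1 hF.1 with ⟨_, hFc⟩ | rfl | rfl
    · exfalso
      have hFH : F = H := (Finset.eq_of_subset_of_card_le hHF (by omega)).symm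
      have := hF.2 A ((hmemK A).2 (Or.inr (Or.inl rfl))) (hFH ▸ hHA)
      rw [this] at hFc
      omega
    · rfl
    · exfalso
      have := hHF hw.1
      rw [hB, Finset.mem_Icc] at this
      omega
  constructor
  · rintro ⟨L, hL⟩
    have hAmem : A ∈ L := List.mem_toFinset.1 (hL.2.1 ▸ hfacA)
    have hBmem : B ∈ L := List.mem_toFinset.1 (hL.2.1 ▸ hfacB)
    obtain ⟨iA, hiA⟩ := List.mem_iff_get.1 hAmem
    obtain ⟨iB, hiB⟩ := List.mem_iff_get.1 hBmem
    rcases lt_trichotomy iA iB with h | h | h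
    · exact shelling_not_late hmaxB hL iA iB hiA hiB h
    · exact hAneB (by rw [← hiA, ← hiB, h])
    · exact shelling_not_late hmaxA hL iB iA hiB hiA h
  · -- induced subcomplexes
    have hverts : verts K = Finset.Icc 1 (d + 3) := by
      apply Finset.Subset.antisymm
      · show Finset.sup K id ≤ Finset.Icc 1 (d + 3)
        apply Finset.sup_le
        intro F hF
        rcases (hmemK F).1 hF with ⟨h, _⟩ | rfl | rfl
        · exact h
        · exact hsubA
        · exact hsubB
      · intro v hv
        have hsing : {v} ∈ K := (hmemK {v}).2 (Or.inl ⟨Finset.singleton_subset_iff.2 hv, by simp; omega⟩)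
        have := Finset.le_sup (f := id) hsing
        exact this (Finset.mem_singleton_self v)
    intro U hU
    rw [hverts] at hU
    have hUsub : U ⊆ Finset.Icc 1 (d + 3) := hU.1
    have hUcard : U.card < d + 3 := by
      have := Finset.card_lt_card hU
      rwa [Nat.card_Icc, show d + 3 + 1 - 1 = d + 3 by omega] at this
    by_cases hAU : A ⊆ U
    · by_cases hBU : B ⊆ U
      · exfalso
        have hunion : A ∪ B = Finset.Icc 1 (d + 3) := by
          ext y
          simp only [hA, hB, Finset.mem_union, Finset.mem_Icc]
          omega
        exact hU.2 (hunion ▸ Finset.union_subset hAU hBU)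
      · -- A ⊆ U, B ⊄ U
        have hUge : d + 1 ≤ U.card := hcardA ▸ Finset.card_le_card hAU
        rcases (by omega : U.card = d + 1 ∨ U.card = d + 2) with hUc | hUc
        · have hUA : U = A := (Finset.eq_of_subset_of_card_le hAU (by omega)).symm
          have hind : inducedSub K U = U.powerset := by
            ext F
            simp only [inducedSub, Finset.mem_filter, Finset.mem_powerset]
            constructor
            · exact fun h => h.2
            · intro h
              refine ⟨?_, h⟩
              by_cases hc : F.card ≤ d
              · exact (hmemK _).2 (Or.inl ⟨h.trans hUsub, hc⟩)
              · have : F = U := Finset.eq_of_subset_of_card_le h (by omega)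
                exact (hmemK _).2 (Or.inr (Or.inl (this.trans hUA)))
          rw [hind]
          exact shellable_of_facets_singleton (facets_powerset U)
        · obtain ⟨x, hx⟩ : (U \ A).Nonempty := by
            rw [← Finset.card_pos, Finset.card_sdiff_of_subset hAU]
            omega
          rw [Finset.mem_sdiff] at hx
          have hUeq : U = insert x A := by
            refine (Finset.eq_of_subset_of_card_le (Finset.insert_subset hx.1 hAU) ?_).symm
            rw [Finset.card_insert_of_notMem hx.2]
            omega
          have hind : inducedSub K U = U.powerset.filter (fun F => F.card ≤ d) ∪ {A} := by
            ext F
            simp only [inducedSub, Finset.mem_filter, Finset.mem_union, Finset.mem_powerset,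
              Finset.mem_singleton]
            constructor
            · rintro ⟨hFK, hFU⟩
              rcases (hmemK F).1 hFK with ⟨_, hc⟩ | rfl | rfl
              · exact Or.inl ⟨hFU, hc⟩
              · exact Or.inr rfl
              · exact absurd hFU hBU
            · rintro (⟨hFU, hc⟩ | rfl)
              · exact ⟨(hmemK _).2 (Or.inl ⟨hFU.trans hUsub, hc⟩), hFU⟩
              · exact ⟨(hmemK _).2 (Or.inr (Or.inl rfl)), hAU⟩
          rw [hind, hUeq]
          exact shellable_cone A x hx.2 d hcardA
    · by_cases hBU : B ⊆ U
      · -- B ⊆ U, A ⊄ U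
        have hUge : d + 1 ≤ U.card := hcardB ▸ Finset.card_le_card hBU
        rcases (by omega : U.card = d + 1 ∨ U.card = d + 2) with hUc | hUc
        · have hUB : U = B := (Finset.eq_of_subset_of_card_le hBU (by omega)).symm
          have hind : inducedSub K U = U.powerset := by
            ext F
            simp only [inducedSub, Finset.mem_filter, Finset.mem_powerset]
            constructor
            · exact fun h => h.2
            · intro h
              refine ⟨?_, h⟩
              by_cases hc : F.card ≤ d
              · exact (hmemK _).2 (Or.inl ⟨h.trans hUsub, hc⟩)
              · have : F = U := Finset.eq_of_subset_of_card_le h (by omega)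
                exact (hmemK _).2 (Or.inr (Or.inr (this.trans hUB)))
          rw [hind]
          exact shellable_of_facets_singleton (facets_powerset U)
        · obtain ⟨x, hx⟩ : (U \ B).Nonempty := by
            rw [← Finset.card_pos, Finset.card_sdiff_of_subset hBU]
            omega
          rw [Finset.mem_sdiff] at hx
          have hUeq : U = insert x B := by
            refine (Finset.eq_of_subset_of_card_le (Finset.insert_subset hx.1 hBU) ?_).symm
            rw [Finset.card_insert_of_notMem hx.2]
            omega
          have hind : inducedSub K U = U.powerset.filter (fun F => F.card ≤ d) ∪ {B} := by
            ext F
            simp only [inducedSub, Finset.mem_filter, Finset.mem_union, Finset.mem_powerset,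
              Finset.mem_singleton]
            constructor
            · rintro ⟨hFK, hFU⟩
              rcases (hmemK F).1 hFK with ⟨_, hc⟩ | rfl | rfl
              · exact Or.inl ⟨hFU, hc⟩
              · exact absurd hFU hAU
              · exact Or.inr rfl
            · rintro (⟨hFU, hc⟩ | rfl)
              · exact ⟨(hmemK _).2 (Or.inl ⟨hFU.trans hUsub, hc⟩), hFU⟩
              · exact ⟨(hmemK _).2 (Or.inr (Or.inr rfl)), hBU⟩
          rw [hind, hUeq]
          exact shellable_cone B x hx.2 d hcardB
      · -- neither
        by_cases hc : U.card ≤ d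
        · have hind : inducedSub K U = U.powerset := by
            ext F
            simp only [inducedSub, Finset.mem_filter, Finset.mem_powerset]
            constructor
            · exact fun h => h.2
            · intro h
              exact ⟨(hmemK _).2 (Or.inl ⟨h.trans hUsub, (Finset.card_le_card h).trans hc⟩), h⟩
          rw [hind]
          exact shellable_of_facets_singleton (facets_powerset U)
        · have hind : inducedSub K U = U.powerset.filter (fun F => F.card ≤ d) := by
            ext F
            simp only [inducedSub, Finset.mem_filter, Finset.mem_powerset]
            constructor
            · rintro ⟨hFK, hFU⟩
              rcases (hmemK F).1 hFK with ⟨_, hcc⟩ | rfl | rfl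
              · exact ⟨hFU, hcc⟩
              · exact absurd hFU hAU
              · exact absurd hFU hBU
            · rintro ⟨hFU, hcc⟩
              exact ⟨(hmemK _).2 (Or.inl ⟨hFU.trans hUsub, hcc⟩), hFU⟩
          rw [hind]
          exact shellable_skel U d (by omega)
end
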